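/- In an order book, let CP'', CP be prices with 0 < CP'' < CP such that no order in B ∪ S has price in the open interval (CP'', CP). If imb(CP) < 0, vol(CP) > 0, vol(CP'') = vol(CP), and |imb(CP'')| ≥ −imb(CP), then CP maximizes the cleared volume over all positive prices: for every P > 0, vol(P) ≤ vol(CP). (This is the correctness of the clearing-price verifier's tie-breaking check at the next price below a proposed price with negative imbalance and positive settled volume.) -/
import Mathlib


variable {ι : Type*}

open Classical in
/-- Total size of buy orders in `B` with price at least `P`. -/
noncomputable def buyVol (B : Finset ι) (price size : ι → ℝ) (P : ℝ) : ℝ :=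
  ∑ o ∈ B.filter (fun o => P ≤ price o), size o

open Classical in
/-- Total size of sell orders in `S` with price at most `P`. -/
noncomputable def sellVol (S : Finset ι) (price size : ι → ℝ) (P : ℝ) : ℝ :=
  ∑ o ∈ S.filter (fun o => price o ≤ P), size o

/-- Cleared volume at candidate clearing price `P`. -/
noncomputable def vol (B S : Finset ι) (price size : ι → ℝ) (P : ℝ) : ℝ :=
  min (buyVol B price size P / P) (sellVol S price size P)

/-- Imbalance at candidate clearing price `P`. -/
noncomputable def imb (B S : Finset ι) (price size : ι → ℝ) (P : ℝ) : ℝ :=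
  buyVol B price size P / P - sellVol S price size P

lemma buyVol_anti' {B : Finset ι} {price size : ι → ℝ}
    (h : ∀ o ∈ B, 0 ≤ size o) {P Q : ℝ} (hPQ : P ≤ Q) :
    buyVol B price size Q ≤ buyVol B price size P := by
  classical
  unfold buyVol
  apply Finset.sum_le_sum_of_subset_of_nonneg
  · intro x hx
    simp only [Finset.mem_filter] at *
    exact ⟨hx.1, le_trans hPQ hx.2⟩
  · intro i hi _
    exact h i (Finset.mem_filter.mp hi).1

lemma sellVol_mono' {S : Finset ι} {price size : ι → ℝ}
    (h : ∀ o ∈ S, 0 ≤ size o) {P Q : ℝ} (hPQ : P ≤ Q) :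
    sellVol S price size P ≤ sellVol S price size Q := by
  classical
  unfold sellVol
  apply Finset.sum_le_sum_of_subset_of_nonneg
  · intro x hx
    simp only [Finset.mem_filter] at *
    exact ⟨hx.1, le_trans hx.2 hPQ⟩
  · intro i hi _
    exact h i (Finset.mem_filter.mp hi).1

/-- Verifier tie-breaking check below a proposed price with negative
imbalance and positive settled volume: equal cleared volume at the next price
below together with an absolute imbalance at least as large certifies the
proposed price. -/
theorem verifier_check_below_tie_break [DecidableEq ι]
    (B S : Finset ι) (price size : ι → ℝ)
    (hprice : ∀ o ∈ B ∪ S, 0 < price o) (hsize : ∀ o ∈ B ∪ S, 0 < size o)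
    (CP'' CP : ℝ) (hCP'' : 0 < CP'') (hlt : CP'' < CP)
    (hgap : ∀ o ∈ B ∪ S, price o ∉ Set.Ioo CP'' CP)
    (himb : imb B S price size CP < 0)
    (hpos : 0 < vol B S price size CP)
    (hvol : vol B S price size CP'' = vol B S price size CP)
    (habs : -imb B S price size CP ≤ |imb B S price size CP''|) :
    ∀ P : ℝ, 0 < P → vol B S price size P ≤ vol B S price size CP := by
  classical
  intro P hP
  have hB0 : ∀ o ∈ B, 0 ≤ size o := fun o ho => (hsize o (Finset.mem_union_left _ ho)).le
  have hS0 : ∀ o ∈ S, 0 ≤ size o := fun o ho => (hsize o (Finset.mem_union_right _ ho)).le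
  have hCP : (0:ℝ) < CP := hCP''.trans hlt
  have hvolCP : vol B S price size CP = buyVol B price size CP / CP := by
    unfold vol
    unfold imb at himb
    rw [min_eq_left]
    linarith
  have hbpos : 0 < buyVol B price size CP / CP := hvolCP ▸ hpos
  have hbuypos : 0 < buyVol B price size CP := by
    by_contra h
    push_neg at h
    have : buyVol B price size CP / CP ≤ 0 := div_nonpos_iff.mpr (Or.inr ⟨h, hCP.le⟩)
    linarith
  have hb'' : buyVol B price size CP / CP < buyVol B price size CP'' / CP'' := by
    have h1 : buyVol B price size CP ≤ buyVol B price size CP'' := buyVol_anti' hB0 hlt.le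
    have h2 : buyVol B price size CP / CP < buyVol B price size CP / CP'' :=
      div_lt_div_of_pos_left hbuypos hCP'' hlt
    have h3 : buyVol B price size CP / CP'' ≤ buyVol B price size CP'' / CP'' :=
      div_le_div_of_nonneg_right h1 hCP''.le  -- may need name fix
    linarith
  have hsell'' : sellVol S price size CP'' = buyVol B price size CP / CP := by
    have h := hvol
    rw [hvolCP] at h
    unfold vol at h
    rcases le_total (buyVol B price size CP'' / CP'') (sellVol S price size CP'') with hc | hc
    · rw [min_eq_left hc] at h; linarith
    · rw [min_eq_right hc] at h; exact h
  rw [hvolCP]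
  rcases le_or_gt P CP'' with hle | hgt
  · calc vol B S price size P ≤ sellVol S price size P := min_le_right _ _
      _ ≤ sellVol S price size CP'' := sellVol_mono' hS0 hle
      _ = _ := hsell''
  · rcases lt_or_ge P CP with hltP | hgeP
    · have hfe : S.filter (fun o => price o ≤ P) = S.filter (fun o => price o ≤ CP'') := by
        apply Finset.filter_congr
        intro o ho
        constructor
        · intro hle
          by_contra hgt'
          push_neg at hgt'
          exact hgap o (Finset.mem_union_right _ ho) ⟨hgt', lt_of_le_of_lt hle hltP⟩
        · intro h'
          exact h'.trans hgt.le
      calc vol B S price size P ≤ sellVol S price size P := min_le_right _ _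
        _ = sellVol S price size CP'' := by unfold sellVol; rw [hfe]
        _ = _ := hsell''
    · calc vol B S price size P ≤ buyVol B price size P / P := min_le_left _ _
        _ ≤ buyVol B price size CP / P :=
            div_le_div_of_nonneg_right (buyVol_anti' hB0 hgeP) hP.le
        _ ≤ buyVol B price size CP / CP :=
            div_le_div_of_nonneg_left hbuypos.le hCP hgeP
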